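/- Every increasing homeomorphism f of [0,1] fixing 0 and 1 can be uniformly approximated by smooth (C^∞) increasing diffeomorphisms of [0,1] fixing 0 and 1: for every ε > 0 there exists a C^∞ increasing bijection g of [0,1] with g(0)=0, g(1)=1, g' > 0 everywhere, and sup |f - g| < ε. -/

import Mathlib

open Set Filter MeasureTheory Metric Polynomial
open scoped Convolution Topology

lemma monotone_deriv_nonneg' {h : ℝ → ℝ} (hm : Monotone h) (hd : Differentiable ℝ h) (x : ℝ) :
    0 ≤ deriv h x := by
  have H : Tendsto (slope h x) (𝓝[>] x) (𝓝 (deriv h x)) :=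
    (hasDerivAt_iff_tendsto_slope.mp (hd x).hasDerivAt).mono_left
      (nhdsWithin_mono x (fun t ht => ne_of_gt ht))
  refine ge_of_tendsto H ?_
  filter_upwards [self_mem_nhdsWithin] with t ht
  have h1 : (0:ℝ) < t - x := sub_pos.mpr ht
  simp only [slope_def_field]
  rw [div_eq_mul_inv]
  exact mul_nonneg (sub_nonneg.mpr (hm ht.le)) (inv_nonneg.mpr h1.le)

set_option maxHeartbeats 1000000 in
/-- Every increasing homeomorphism of `[0,1]` fixing `0` and `1` can be
uniformly approximated by `C^∞` increasing diffeomorphisms fixing `0` and `1`. -/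
theorem stmt3 (f : ℝ → ℝ)
    (hcont : ContinuousOn f (Icc 0 1))
    (hmono : StrictMonoOn f (Icc 0 1))
    (hbij : BijOn f (Icc 0 1) (Icc 0 1))
    (h0 : f 0 = 0) (h1 : f 1 = 1) :
    ∀ ε > (0:ℝ), ∃ g : ℝ → ℝ, ContDiff ℝ (⊤ : ℕ∞) g ∧ StrictMonoOn g (Icc 0 1) ∧
      BijOn g (Icc 0 1) (Icc 0 1) ∧ g 0 = 0 ∧ g 1 = 1 ∧
      (∀ x ∈ Icc (0:ℝ) 1, 0 < deriv g x) ∧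
      (∀ x ∈ Icc (0:ℝ) 1, |f x - g x| < ε) := by
  intro ε hε
  -- the clamp function
  set c : ℝ → ℝ := fun x => max 0 (min 1 x) with hc
  have hc_mem : ∀ x, c x ∈ Icc (0:ℝ) 1 := fun x =>
    ⟨le_max_left _ _, max_le zero_le_one (min_le_left _ _)⟩
  have hc_cont : Continuous c := continuous_const.max (continuous_const.min continuous_id)
  have hc_mono : Monotone c :=
    monotone_const.max (monotone_const.min monotone_id)
  have hc_eq : ∀ x ∈ Icc (0:ℝ) 1, c x = x := by
    intro x hx
    simp [hc, min_eq_right hx.2, max_eq_right hx.1]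
  -- the extension F of f to ℝ
  set F : ℝ → ℝ := fun x => f (c x) + (x - c x) with hF
  have hFeq : ∀ x ∈ Icc (0:ℝ) 1, F x = f x := by
    intro x hx; simp [hF, hc_eq x hx]
  have hF0 : F 0 = 0 := by rw [hFeq 0 (by norm_num)]; exact h0
  have hF1 : F 1 = 1 := by rw [hFeq 1 (by norm_num)]; exact h1
  have hFcont : Continuous F :=
    (hcont.comp_continuous hc_cont hc_mem).add (continuous_id.sub hc_cont)
  have hFmono : Monotone F := by
    have hm1 : Monotone fun x => f (c x) :=
      fun x y hxy => (hmono.monotoneOn) (hc_mem x) (hc_mem y) (hc_mono hxy)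
    have hm2 : Monotone fun x : ℝ => x - c x := by
      intro x y hxy
      simp only
      rcases le_total y 0 with hy | hy
      · have hcx : c x = 0 := by
          simp [hc, min_eq_right (by linarith : x ≤ (1:ℝ)), max_eq_left (by linarith : x ≤ (0:ℝ))]
        have hcy : c y = 0 := by
          simp [hc, min_eq_right (by linarith : y ≤ (1:ℝ)), max_eq_left hy]
        rw [hcx, hcy]; linarith
      · rcases le_total 1 x with hx | hx
        · have hcx : c x = 1 := by simp [hc, min_eq_left hx]
          have hcy : c y = 1 := by simp [hc, min_eq_left (by linarith : (1:ℝ) ≤ y)]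
          rw [hcx, hcy]; linarith
        · have hx0 : x - c x ≤ 0 := by
            rcases le_total x 0 with h | h
            · have : (0:ℝ) ≤ c x := (hc_mem x).1; linarith
            · have : c x = x := hc_eq x ⟨h, hx⟩; simp [this]
          have hy0 : 0 ≤ y - c y := by
            rcases le_total 1 y with h | h
            · have : c y ≤ 1 := (hc_mem y).2; linarith
            · have : c y = y := hc_eq y ⟨hy, h⟩; simp [this]
          linarith
    exact hm1.add hm2
  -- small parameter
  set η : ℝ := min (ε / 16) 16⁻¹ with hηdef
  have hηpos : 0 < η := lt_min (by linarith) (by norm_num)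
  have hηε : η ≤ ε / 16 := min_le_left _ _
  have hη16 : η ≤ 16⁻¹ := min_le_right _ _
  -- uniform continuity modulus
  have huc := (isCompact_Icc (a := (-1:ℝ)) (b := 2)).uniformContinuousOn_of_continuous
    hFcont.continuousOn
  rw [Metric.uniformContinuousOn_iff_le] at huc
  obtain ⟨δ, hδpos, hδ⟩ := huc η hηpos
  -- the bump function
  set r : ℝ := min δ 1 with hr
  have hrpos : 0 < r := lt_min hδpos one_pos
  set φ : ContDiffBump (0:ℝ) := ⟨r / 2, r, by positivity, by linarith [half_lt_self hrpos]⟩ with hφ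
  have hφr : φ.rOut = r := rfl
  -- mollification
  set g₀ : ℝ → ℝ := φ.normed volume ⋆[ContinuousLinearMap.lsmul ℝ ℝ, volume] F with hg₀
  have hg₀smooth : ContDiff ℝ ((⊤ : ℕ∞) : WithTop ℕ∞) g₀ :=
    HasCompactSupport.contDiff_convolution_left (n := (⊤ : ℕ∞)) (ContinuousLinearMap.lsmul ℝ ℝ)
      φ.hasCompactSupport_normed φ.contDiff_normed (hFcont.locallyIntegrable)
  have hg₀diff : Differentiable ℝ g₀ :=
    hg₀smooth.differentiable (by simp)
  -- closeness of g₀ to F on [0,1]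
  have hclose : ∀ x₀ ∈ Icc (0:ℝ) 1, |g₀ x₀ - F x₀| ≤ η := by
    intro x₀ hx₀
    have := ContDiffBump.dist_normed_convolution_le (φ := φ) (μ := volume)
      hFcont.aestronglyMeasurable (x₀ := x₀) (ε := η) ?_
    · rwa [Real.dist_eq] at this
    · intro x hx
      rw [mem_ball, Real.dist_eq] at hx
      have hxr : |x - x₀| < r := lt_of_lt_of_le hx (le_of_eq hφr)
      have hd1 : |x - x₀| < δ := lt_of_lt_of_le hxr (min_le_left _ _)
      have hd2 : |x - x₀| < 1 := lt_of_lt_of_le hxr (min_le_right _ _)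
      have hxmem : x ∈ Icc (-1:ℝ) 2 := by
        rw [abs_lt] at hd2
        constructor <;> [linarith [hx₀.1]; linarith [hx₀.2]]
      have hx₀mem : x₀ ∈ Icc (-1:ℝ) 2 := ⟨by linarith [hx₀.1], by linarith [hx₀.2]⟩
      have := hδ x hxmem x₀ hx₀mem (by rw [Real.dist_eq]; exact hd1.le)
      rwa [Real.dist_eq] at this
  -- monotonicity of g₀
  have hg₀mono : Monotone g₀ := by
    intro x y hxy
    have hint : ∀ z : ℝ, Integrable (fun t => φ.normed volume t * F (z - t)) volume := by
      intro z
      apply Continuous.integrable_of_hasCompactSupport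
      · exact (φ.contDiff_normed (n := (⊤:ℕ∞))).continuous.mul (hFcont.comp (continuous_const.sub continuous_id))
      · exact φ.hasCompactSupport_normed.mul_right
    have hxe : g₀ x = ∫ t, φ.normed volume t * F (x - t) := by
      simp [hg₀, convolution_def, ContinuousLinearMap.lsmul_apply, smul_eq_mul]
    have hye : g₀ y = ∫ t, φ.normed volume t * F (y - t) := by
      simp [hg₀, convolution_def, ContinuousLinearMap.lsmul_apply, smul_eq_mul]
    rw [hxe, hye]
    refine integral_mono (hint x) (hint y) (fun t => ?_)
    exact mul_le_mul_of_nonneg_left (hFmono (by linarith)) (φ.nonneg_normed t)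
  have hg₀deriv : ∀ x, 0 ≤ deriv g₀ x := monotone_deriv_nonneg' hg₀mono hg₀diff
  have hderivg₀_cont : Continuous (deriv g₀) :=
    hg₀smooth.continuous_deriv (by exact_mod_cast le_top)
  -- endpoint values
  have ha : |g₀ 0| ≤ η := by
    have := hclose 0 (by norm_num); rwa [hF0, sub_zero] at this
  have hb : |g₀ 1 - 1| ≤ η := by
    have := hclose 1 (by norm_num); rwa [hF1] at this
  rw [abs_le] at ha hb
  have hab : g₀ 0 ≤ g₀ 1 := hg₀mono zero_le_one
  have hfg_all : ∀ x ∈ Icc (0:ℝ) 1, |f x - g₀ x| ≤ η := by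
    intro x hx
    have := hclose x hx; rw [hFeq x hx] at this; rwa [abs_sub_comm]
  clear_value g₀ φ
  clear hg₀ hφ hδ huc hφr hrpos hδpos hclose hFcont hFmono hF0 hF1 hg₀smooth φ hr
  clear r δ
  -- smooth corrected function h
  set lam : ℝ := 3 * η with hlamdef
  set mu : ℝ := 1 - (1 - lam) * (g₀ 1 - g₀ 0) with hmudef
  have hmu_low : η ≤ mu := by rw [hmudef, hlamdef]; nlinarith [ha.1, ha.2, hb.1, hb.2, hηpos.le]
  have hmu_up : mu ≤ 5 * η := by rw [hmudef, hlamdef]; nlinarith [ha.1, ha.2, hb.1, hb.2, hηpos.le]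
  set h : ℝ → ℝ := fun x => (1 - lam) * (g₀ x - g₀ 0) + mu * x with hhdef
  set dh : ℝ → ℝ := fun x => (1 - lam) * deriv g₀ x + mu with hdhdef
  have hhderiv : ∀ x, HasDerivAt h (dh x) x := by
    intro x
    have := (((hg₀diff x).hasDerivAt.sub_const (g₀ 0)).const_mul (1 - lam)).add
      ((hasDerivAt_id x).const_mul mu)
    simp [hhdef, hdhdef] at this ⊢; exact this
  have hlam1 : lam ≤ 3 * 16⁻¹ := by rw [hlamdef]; linarith
  have hdh_low : ∀ x, mu ≤ dh x := by
    intro x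
    have h1 : 0 ≤ (1 - lam) * deriv g₀ x :=
      mul_nonneg (by linarith) (hg₀deriv x)
    simp only [hdhdef]; linarith
  have hdh_pos : ∀ x, 0 < dh x := fun x => lt_of_lt_of_le (lt_of_lt_of_le hηpos hmu_low) (hdh_low x)
  have hh_sm : StrictMono h := by
    apply strictMono_of_deriv_pos
    intro x
    rw [(hhderiv x).deriv]
    exact hdh_pos x
  have hh0 : h 0 = 0 := by simp [hhdef]
  have hh1 : h 1 = 1 := by simp only [hhdef, hmudef]; ring
  have hhmaps : MapsTo h (Icc 0 1) (Icc 0 1) := by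
    intro x hx
    constructor
    · rw [← hh0]; exact hh_sm.monotone hx.1
    · rw [← hh1]; exact hh_sm.monotone hx.2
  -- closeness of h to f
  have hlam0 : (0:ℝ) ≤ lam := by rw [hlamdef]; linarith
  have hhclose : ∀ x ∈ Icc (0:ℝ) 1, |f x - h x| ≤ 11 * η := by
    intro x hx
    have hfg : |f x - g₀ x| ≤ η := hfg_all x hx
    have hgx_lo : -η ≤ g₀ x := le_trans ha.1 (hg₀mono hx.1)
    have hgx_hi : g₀ x ≤ 1 + η := le_trans (hg₀mono hx.2) (by linarith [hb.2])
    have e1a : lam * g₀ x ≤ lam * (1 + η) := mul_le_mul_of_nonneg_left hgx_hi hlam0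
    have e1b : lam * (-η) ≤ lam * g₀ x := mul_le_mul_of_nonneg_left hgx_lo hlam0
    have e1c : lam * (1 + η) ≤ 4 * η := by rw [hlamdef]; nlinarith [hηpos.le, hη16]
    have e1d : -(4 * η) ≤ lam * (-η) := by rw [hlamdef]; nlinarith [hηpos.le, hη16]
    have hlam2 : (0:ℝ) ≤ 1 - lam := by rw [hlamdef]; linarith
    have e2a : (1 - lam) * g₀ 0 ≤ (1 - lam) * η := mul_le_mul_of_nonneg_left ha.2 hlam2
    have e2b : (1 - lam) * (-η) ≤ (1 - lam) * g₀ 0 := mul_le_mul_of_nonneg_left ha.1 hlam2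
    have e2c : (1 - lam) * η ≤ η := by linarith [mul_nonneg hlam0 hηpos.le]
    have e2d : -η ≤ (1 - lam) * (-η) := by linarith [mul_nonneg hlam0 hηpos.le]
    have hmu0 : (0:ℝ) ≤ mu := by linarith
    have e3a : mu * x ≤ mu := mul_le_of_le_one_right hmu0 hx.2
    have e3b : 0 ≤ mu * x := mul_nonneg hmu0 hx.1
    rw [abs_le] at hfg ⊢
    have e : f x - h x = (f x - g₀ x) + (lam * g₀ x + (1 - lam) * g₀ 0 - mu * x) := by
      rw [hhdef]; ring
    rw [e]
    constructor <;> linarith [hfg.1, hfg.2]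
  -- Stage 2 : polynomial approximation
  have hdh_cont : Continuous dh := by
    rw [hdhdef]
    exact (continuous_const.mul hderivg₀_cont).add continuous_const
  set θ : ℝ := min η (mu / 2) with hθdef
  have hθpos : 0 < θ := lt_min hηpos (by linarith)
  have hθη : θ ≤ η := min_le_left _ _
  have hθmu : θ ≤ mu / 2 := min_le_right _ _
  obtain ⟨q, hq⟩ := exists_polynomial_near_of_continuousOn 0 1 dh hdh_cont.continuousOn θ hθpos
  obtain ⟨P, hPd, hP0⟩ : ∃ P : ℝ[X], P.derivative = q ∧ P.eval 0 = 0 := by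
    refine ⟨q.sum (fun n a => C (a / (n+1)) * X ^ (n+1)), ?_, ?_⟩
    · rw [Polynomial.sum_def, map_sum]
      calc ∑ n ∈ q.support, derivative (C (q.coeff n / (n+1)) * X ^ (n+1))
          = ∑ n ∈ q.support, C (q.coeff n) * X ^ n := by
            apply Finset.sum_congr rfl
            intro n hn
            rw [derivative_C_mul_X_pow]
            congr 1
            congr 1
            push_cast
            rw [div_mul_eq_mul_div, mul_div_assoc, div_self (by positivity), mul_one]
        _ = q := by conv_rhs => rw [← sum_C_mul_X_pow_eq q, Polynomial.sum_def]
    · rw [Polynomial.sum_def, Polynomial.eval_finset_sum]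
      apply Finset.sum_eq_zero
      intro n hn
      simp [zero_pow (Nat.succ_ne_zero n)]
  -- the polynomial P is close to h on [0,1]
  have hPh : ∀ x ∈ Icc (0:ℝ) 1, |P.eval x - h x| ≤ θ := by
    intro x hx
    have key := Convex.norm_image_sub_le_of_norm_hasDerivWithin_le
      (f := fun y => P.eval y - h y) (f' := fun y => q.eval y - dh y) (C := θ)
      (s := Icc (0:ℝ) 1) ?_ ?_ (convex_Icc 0 1) (left_mem_Icc.mpr zero_le_one) hx
    · simp only [hh0, hP0, sub_zero, Real.norm_eq_abs] at key
      calc |P.eval x - h x| ≤ θ * |x| := key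
        _ ≤ θ * 1 := by
            apply mul_le_mul_of_nonneg_left _ hθpos.le
            rw [abs_le]; exact ⟨by linarith [hx.1], hx.2⟩
        _ = θ := mul_one θ
    · intro y _
      have hPy := P.hasDerivAt y
      rw [hPd] at hPy
      exact (hPy.sub (hhderiv y)).hasDerivWithinAt
    · intro y hy
      rw [Real.norm_eq_abs]
      exact (hq y hy).le
  have hP1 : |P.eval 1 - 1| ≤ θ := by
    have := hPh 1 (right_mem_Icc.mpr zero_le_one)
    rwa [hh1] at this
  have hθ16 : θ ≤ 16⁻¹ := le_trans hθη hη16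
  have hP1half : 1/2 ≤ P.eval 1 := by
    rw [abs_le] at hP1; linarith [hP1.1]
  have hP1pos : 0 < P.eval 1 := by linarith
  -- the final polynomial function g
  set g : ℝ → ℝ := fun x => P.eval x * (P.eval 1)⁻¹ with hgdef
  have hg_cd : ContDiff ℝ (⊤ : ℕ∞) g := by
    rw [hgdef]
    exact ((AnalyticOnNhd.eval_polynomial (𝕜 := ℝ) P).contDiff).mul contDiff_const
  have hgderiv : ∀ x, HasDerivAt g (q.eval x * (P.eval 1)⁻¹) x := by
    intro x
    have := (P.hasDerivAt x).mul_const (P.eval 1)⁻¹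
    rwa [hPd] at this
  have hqpos : ∀ x ∈ Icc (0:ℝ) 1, 0 < q.eval x := by
    intro x hx
    have h1 := (abs_lt.mp (hq x hx)).1
    have h2 := hdh_low x
    linarith
  have hgd_pos : ∀ x ∈ Icc (0:ℝ) 1, 0 < deriv g x := by
    intro x hx
    rw [(hgderiv x).deriv]
    exact mul_pos (hqpos x hx) (inv_pos.mpr hP1pos)
  have hg_sm : StrictMonoOn g (Icc 0 1) := by
    apply strictMonoOn_of_deriv_pos (convex_Icc 0 1) hg_cd.continuous.continuousOn
    intro x hx
    rw [interior_Icc] at hx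
    exact hgd_pos x (Ioo_subset_Icc_self hx)
  have hg0 : g 0 = 0 := by rw [hgdef]; simp [hP0]
  have hg1 : g 1 = 1 := by
    rw [hgdef]
    exact mul_inv_cancel₀ (ne_of_gt hP1pos)
  have hgmaps : MapsTo g (Icc 0 1) (Icc 0 1) := by
    intro x hx
    constructor
    · rw [← hg0]
      exact hg_sm.monotoneOn (left_mem_Icc.mpr zero_le_one) hx hx.1
    · rw [← hg1]
      exact hg_sm.monotoneOn hx (right_mem_Icc.mpr zero_le_one) hx.2
  have hgsurj : SurjOn g (Icc 0 1) (Icc 0 1) := by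
    have := intermediate_value_Icc (zero_le_one (α := ℝ)) hg_cd.continuous.continuousOn
    rw [hg0, hg1] at this
    exact this
  refine ⟨g, hg_cd, hg_sm, ⟨hgmaps, hg_sm.injOn, hgsurj⟩, hg0, hg1, hgd_pos, ?_⟩
  intro x hx
  have hA := hhclose x hx
  have hB := hPh x hx
  have hPx : |P.eval x| ≤ 1 + θ := by
    have hhx := hhmaps hx
    rw [abs_le] at hB ⊢
    exact ⟨by linarith [hB.1, hhx.1], by linarith [hB.2, hhx.2]⟩
  have hinv2 : (P.eval 1)⁻¹ ≤ 2 := by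
    rw [inv_le_comm₀ hP1pos (by norm_num)]
    linarith
  have hinvabs : |(P.eval 1)⁻¹| ≤ 2 := by
    rw [abs_of_pos (inv_pos.mpr hP1pos)]; exact hinv2
  have hthird : |P.eval x - g x| ≤ 3 * θ := by
    have e3 : P.eval x - g x = P.eval x * ((P.eval 1 - 1) * (P.eval 1)⁻¹) := by
      rw [hgdef]
      field_simp
    rw [e3, abs_mul, abs_mul]
    have step : |P.eval x| * (|P.eval 1 - 1| * |(P.eval 1)⁻¹|) ≤ (1 + θ) * (θ * 2) := by
      apply mul_le_mul hPx _ (mul_nonneg (abs_nonneg _) (abs_nonneg _)) (by linarith)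
      exact mul_le_mul hP1 hinvabs (abs_nonneg _) hθpos.le
    nlinarith [hθpos.le, hθ16]
  have split : f x - g x = (f x - h x) + (h x - P.eval x) + (P.eval x - g x) := by ring
  have habs : |f x - g x| ≤ 11 * η + θ + 3 * θ := by
    rw [split]
    calc |f x - h x + (h x - P.eval x) + (P.eval x - g x)|
        ≤ |f x - h x + (h x - P.eval x)| + |P.eval x - g x| := abs_add_le _ _
      _ ≤ |f x - h x| + |h x - P.eval x| + |P.eval x - g x| := by
          linarith [abs_add_le (f x - h x) (h x - P.eval x)]
      _ ≤ 11 * η + θ + 3 * θ := by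
          rw [abs_sub_comm (h x) (P.eval x)]
          linarith [hA, hB, hthird]
  calc |f x - g x| ≤ 11 * η + θ + 3 * θ := habs
    _ ≤ 15 * η := by linarith
    _ ≤ 15 * (ε / 16) := by linarith
    _ < ε := by linarith
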